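/- For the wiretap channel of the previous statements, the single-auxiliary optimum is strictly less than 1/2: max over P_{V,X} with E[C(X)] ≤ 1/2 of I(V;Y) − I(V;Z) < 1/2. Consequently, since two auxiliaries achieve 1/2, the secrecy-capacity with two auxiliaries strictly exceeds the best single-auxiliary value. -/

import Mathlib

open scoped BigOperators

/-- Mutual information `I(A;B)` (in bits) of a joint PMF `p` on `A × B`. -/
noncomputable def miJ {A B : Type*} [Fintype A] [Fintype B] (p : A → B → ℝ) : ℝ :=
  ∑ a, ∑ b, p a b * Real.logb 2 (p a b / ((∑ b', p a b') * (∑ a', p a' b)))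

/-- Conditional mutual information `I(A;B|C)` (in bits) of a joint PMF `p` on `A × B × C`. -/
noncomputable def cmiJ {A B C : Type*} [Fintype A] [Fintype B] [Fintype C]
    (p : A → B → C → ℝ) : ℝ :=
  ∑ a, ∑ b, ∑ c, p a b c *
    Real.logb 2 ((p a b c * (∑ a', ∑ b', p a' b' c)) /
      ((∑ b', p a b' c) * (∑ a', p a' b c)))

/-- The conditional law of the legitimate receiver's output `Y = X̃·Z̃ + N·(1−Z̃)`
given the input pair `(x̃, z̃)`, with `N ~ Ber(1/2)` independent of the input. -/
noncomputable def chY (xt zt y : Bool) : ℝ :=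
  if zt then (if y = xt then 1 else 0) else 1 / 2



open Real Set


open Real Set

private lemma hlog2 : (0:ℝ) < Real.log 2 := Real.log_pos one_lt_two
private lemma hlog2' : (1:ℝ)/2 < Real.log 2 := lt_trans (by norm_num) Real.log_two_gt_d9
private lemma hlog2'' : Real.log 2 < 1 := lt_trans Real.log_two_lt_d9 (by norm_num)

/-- derivative of ψ(x) = binEntropy x - 4 log 2 (x(1-x)) -/
private lemma hasDerivAt_psi {x : ℝ} (h0 : x ≠ 0) (h1 : x ≠ 1) :
    HasDerivAt (fun x => Real.binEntropy x - 4 * Real.log 2 * (x * (1 - x)))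
      ((Real.log (1 - x) - Real.log x) - 4 * Real.log 2 * (1 - 2*x)) x := by
  have hb := Real.hasDerivAt_binEntropy h0 h1
  have hp : HasDerivAt (fun x : ℝ => 4 * Real.log 2 * (x * (1 - x)))
      (4 * Real.log 2 * (1 - 2*x)) x := by
    have : HasDerivAt (fun x : ℝ => x * (1 - x)) (1 * (1 - x) + x * (-1)) x :=
      (hasDerivAt_id x).mul ((hasDerivAt_id x).const_sub 1)
    have := this.const_mul (4 * Real.log 2)
    exact this.congr_deriv (by ring)
  exact hb.sub hp

private lemma hasDerivAt_psi' {x : ℝ} (h0 : x ≠ 0) (h1 : (1:ℝ) - x ≠ 0) :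
    HasDerivAt (fun x => (Real.log (1 - x) - Real.log x) - 4 * Real.log 2 * (1 - 2*x))
      ((-(1 - x)⁻¹ - x⁻¹) + 8 * Real.log 2) x := by
  have hl1 : HasDerivAt (fun x : ℝ => Real.log (1 - x)) ((1-x)⁻¹ * (-1)) x :=
    (Real.hasDerivAt_log h1).comp x ((hasDerivAt_id x).const_sub 1)
  have hl2 := Real.hasDerivAt_log h0
  have hp : HasDerivAt (fun x : ℝ => 4 * Real.log 2 * (1 - 2*x))
      (4 * Real.log 2 * (-2)) x := by
    have : HasDerivAt (fun x : ℝ => 1 - 2*x) (-2 : ℝ) x := by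
      simpa using ((hasDerivAt_id x).const_mul (2:ℝ)).const_sub 1
    simpa only [Real.sqrt_one] using this.const_mul (4 * Real.log 2)
  have := (hl1.sub hl2).sub hp
  exact this.congr_deriv (by ring)

noncomputable def x₀ : ℝ := (1 - Real.sqrt (1 - 1/(2*Real.log 2)))/2

private lemma x0_facts : 0 < x₀ ∧ x₀ < 1/2 ∧ x₀ * (1 - x₀) = 1/(8*Real.log 2) := by
  have hc := hlog2; have hc2 := hlog2'
  set s := Real.sqrt (1 - 1/(2*Real.log 2)) with hs
  have harg0 : 0 ≤ 1 - 1/(2*Real.log 2) := by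
    rw [sub_nonneg, div_le_one (by linarith)]; linarith
  have harglt : 1 - 1/(2*Real.log 2) < 1 := by
    have : 0 < 1/(2*Real.log 2) := by positivity
    linarith
  have hs0 : 0 < s := Real.sqrt_pos.mpr (by
    rw [sub_pos, div_lt_one (by linarith)]
    have := hlog2''; linarith)
  have hs1 : s < 1 := by
    have := Real.sqrt_lt_sqrt harg0 harglt
    simpa only [Real.sqrt_one] using this
  have hssq : s^2 = 1 - 1/(2*Real.log 2) := Real.sq_sqrt harg0
  refine ⟨by simp only [x₀]; linarith, by simp only [x₀]; linarith, ?_⟩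
  have : x₀ * (1 - x₀) = (1 - s^2)/4 := by simp only [x₀]; ring
  rw [this, hssq]
  field_simp; ring

private lemma psi_contOn {D : Set ℝ} :
    ContinuousOn (fun x => Real.binEntropy x - 4 * Real.log 2 * (x * (1 - x))) D :=
  (Real.binEntropy_continuous.sub (by continuity)).continuousOn

private lemma psi_nonneg : ∀ x ∈ Icc (0:ℝ) (1/2),
    0 ≤ Real.binEntropy x - 4 * Real.log 2 * (x * (1 - x)) := by
  obtain ⟨hx0, hx12, hxprod⟩ := x0_facts
  have hc := hlog2
  set ψ := fun x => Real.binEntropy x - 4 * Real.log 2 * (x * (1 - x)) with hψ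
  -- convex on [x₀, 1/2]
  have hconv : ConvexOn ℝ (Icc x₀ (1/2)) ψ := by
    apply convexOn_of_hasDerivWithinAt2_nonneg (convex_Icc _ _) psi_contOn
      (f' := fun x => (Real.log (1 - x) - Real.log x) - 4 * Real.log 2 * (1 - 2*x))
      (f'' := fun x => (-(1 - x)⁻¹ - x⁻¹) + 8 * Real.log 2)
    · intro x hx
      rw [interior_Icc] at hx
      exact (hasDerivAt_psi (by linarith [hx.1]) (by nlinarith [hx.1, hx.2])).hasDerivWithinAt
    · intro x hx
      rw [interior_Icc] at hx
      exact (hasDerivAt_psi' (by linarith [hx.1]) (by nlinarith [hx.1, hx.2])).hasDerivWithinAt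
    · intro x hx
      rw [interior_Icc] at hx
      obtain ⟨ha, hb⟩ := hx
      have h0 : 0 < x := lt_trans hx0 ha
      have h1 : 0 < 1 - x := by linarith
      have hsum : (1-x)⁻¹ + x⁻¹ = 1/(x*(1-x)) := by field_simp; ring
      have hmono : x₀ * (1 - x₀) ≤ x * (1 - x) := by nlinarith
      have h8 : 1/(x*(1-x)) ≤ 8 * Real.log 2 := by
        rw [div_le_iff₀ (by positivity)]
        rw [hxprod] at hmono
        have h8c : 0 < 8 * Real.log 2 := by positivity
        rw [div_le_iff₀ h8c] at hmono
        linarith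
      linarith [hsum, h8]
  -- ψ(1/2) = 0, ψ'(1/2) = 0, so ψ ≥ 0 on [x₀,1/2] by tangent at right endpoint
  have hhalf : ψ (1/2) = 0 := by
    simp only [hψ]
    rw [show (1:ℝ)/2 = 2⁻¹ by norm_num, Real.binEntropy_two_inv]
    ring
  have hderhalf : HasDerivAt ψ 0 (1/2) := by
    have := hasDerivAt_psi (x := 1/2) (by norm_num) (by norm_num)
    convert this using 1
    norm_num
  have hpos2 : ∀ x ∈ Icc x₀ (1/2), 0 ≤ ψ x := by
    intro x hx
    rcases eq_or_lt_of_le hx.2 with heq | hlt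
    · rw [heq, hhalf]
    · have hslope := hconv.slope_le_of_hasDerivAt hx
        (by constructor <;> linarith [hx.1] : (1:ℝ)/2 ∈ Icc x₀ (1/2)) hlt hderhalf
      rw [slope_def_field, hhalf] at hslope
      have hd : 0 < 1/2 - x := by linarith
      have := mul_le_mul_of_nonneg_right hslope (le_of_lt hd)
      rw [div_mul_cancel₀ _ (ne_of_gt hd), zero_mul] at this
      linarith
  -- concave on [0,x₀], endpoints ≥ 0
  have hconc : ConcaveOn ℝ (Icc 0 x₀) ψ := by
    apply concaveOn_of_hasDerivWithinAt2_nonpos (convex_Icc _ _) psi_contOn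
      (f' := fun x => (Real.log (1 - x) - Real.log x) - 4 * Real.log 2 * (1 - 2*x))
      (f'' := fun x => (-(1 - x)⁻¹ - x⁻¹) + 8 * Real.log 2)
    · intro x hx
      rw [interior_Icc] at hx
      exact (hasDerivAt_psi (by linarith [hx.1]) (by nlinarith [hx.1, hx.2])).hasDerivWithinAt
    · intro x hx
      rw [interior_Icc] at hx
      exact (hasDerivAt_psi' (by linarith [hx.1]) (by nlinarith [hx.1, hx.2])).hasDerivWithinAt
    · intro x hx
      rw [interior_Icc] at hx
      obtain ⟨ha, hb⟩ := hx
      have h1 : 0 < 1 - x := by linarith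
      have hsum : (1-x)⁻¹ + x⁻¹ = 1/(x*(1-x)) := by field_simp; ring
      have hmono : x * (1 - x) ≤ x₀ * (1 - x₀) := by nlinarith
      have : 1/(x₀*(1-x₀)) ≤ 1/(x*(1-x)) := by
        apply one_div_le_one_div_of_le (by nlinarith) hmono
      rw [hxprod] at this
      have h8 : 8 * Real.log 2 ≤ 1/(x*(1-x)) := by
        calc 8 * Real.log 2 = 1/(1/(8*Real.log 2)) := by field_simp
          _ ≤ 1/(x*(1-x)) := this
      have := hsum ▸ h8
      linarith
  intro x hx
  rcases le_or_gt x x₀ with hle | hgt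
  · -- use concavity: x = (1 - x/x₀)•0 + (x/x₀)•x₀
    have h0 : ψ 0 = 0 := by simp [hψ]
    have hx₀val : 0 ≤ ψ x₀ := hpos2 x₀ ⟨le_refl _, by linarith⟩
    have hb : 0 ≤ x/x₀ := div_nonneg hx.1 (le_of_lt hx0)
    have hb1 : x/x₀ ≤ 1 := (div_le_one hx0).mpr hle
    have := hconc.2
      (⟨le_refl _, le_of_lt hx0⟩ : (0:ℝ) ∈ Icc 0 x₀)
      (⟨le_of_lt hx0, le_refl _⟩ : x₀ ∈ Icc 0 x₀)
      (show (0:ℝ) ≤ 1 - x/x₀ by linarith) hb (by ring)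
    have hxeq : (1 - x/x₀) • (0:ℝ) + (x/x₀) • x₀ = x := by
      field_simp
      rw [smul_eq_mul, smul_eq_mul, mul_zero, zero_add, div_mul_cancel₀ x (ne_of_gt hx0)]
    rw [hxeq] at this
    simp only [smul_eq_mul, h0, mul_zero, zero_add] at this
    calc (0:ℝ) ≤ (x/x₀) * ψ x₀ := mul_nonneg hb hx₀val
      _ ≤ ψ x := this
  · exact hpos2 x ⟨le_of_lt hgt, hx.2⟩

/-- Key inequality (A): binEntropy x ≥ 4 log 2 · x(1-x) on [0, 1/2]. -/
lemma binEntropy_ge_parabola {x : ℝ} (h0 : 0 ≤ x) (h1 : x ≤ 1/2) :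
    4 * Real.log 2 * (x * (1 - x)) ≤ Real.binEntropy x := by
  have := psi_nonneg x ⟨h0, h1⟩
  linarith

/-- Key fact (B): t ↦ binEntropy t + log 2 · t² is concave on [0,1]. -/
lemma concave_phi :
    ConcaveOn ℝ (Icc (0:ℝ) 1) (fun t => Real.binEntropy t + Real.log 2 * t^2) := by
  have hc := hlog2
  apply concaveOn_of_hasDerivWithinAt2_nonpos (convex_Icc _ _)
    ((Real.binEntropy_continuous.add (by continuity)).continuousOn)
    (f' := fun t => (Real.log (1 - t) - Real.log t) + 2 * Real.log 2 * t)
    (f'' := fun t => (-(1 - t)⁻¹ - t⁻¹) + 2 * Real.log 2)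
  · intro x hx
    rw [interior_Icc] at hx
    have hb := Real.hasDerivAt_binEntropy (ne_of_gt hx.1) (ne_of_lt hx.2)
    have hp : HasDerivAt (fun t : ℝ => Real.log 2 * t^2) (2 * Real.log 2 * x) x := by
      have := (hasDerivAt_pow 2 x).const_mul (Real.log 2)
      exact this.congr_deriv (by rw [show (2:ℕ) - 1 = 1 from rfl]; push_cast; ring)
    exact (hb.add hp).hasDerivWithinAt
  · intro x hx
    rw [interior_Icc] at hx
    have h1 : (1:ℝ) - x ≠ 0 := by linarith [hx.2]
    have hl1 : HasDerivAt (fun t : ℝ => Real.log (1 - t)) ((1-x)⁻¹ * (-1)) x :=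
      (Real.hasDerivAt_log h1).comp x ((hasDerivAt_id x).const_sub 1)
    have hl2 := Real.hasDerivAt_log (ne_of_gt hx.1)
    have hp : HasDerivAt (fun t : ℝ => 2 * Real.log 2 * t) (2 * Real.log 2) x := by
      simpa using (hasDerivAt_id x).const_mul (2 * Real.log 2)
    have := (hl1.sub hl2).add hp
    refine HasDerivAt.hasDerivWithinAt ?_
    exact this.congr_deriv (by ring)
  · intro x hx
    rw [interior_Icc] at hx
    have h0 : 0 < x := hx.1
    have h1 : 0 < 1 - x := by linarith [hx.2]
    have hsum : (1-x)⁻¹ + x⁻¹ = 1/(x*(1-x)) := by field_simp; ring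
    have h4 : (4:ℝ) ≤ 1/(x*(1-x)) := by
      rw [le_div_iff₀ (by positivity)]
      nlinarith [sq_nonneg (1 - 2*x)]
    have hc1 := hlog2''
    linarith [hsum, h4]

/-- Binary entropy in bits. -/
noncomputable def H2 (x : ℝ) : ℝ := -(x * Real.logb 2 x) - (1-x) * Real.logb 2 (1-x)

lemma H2_eq (x : ℝ) : H2 x = Real.binEntropy x / Real.log 2 := by
  unfold H2 Real.binEntropy Real.logb
  rw [Real.log_inv, Real.log_inv]
  field_simp
  ring

lemma H2_le_one (x : ℝ) : H2 x ≤ 1 := by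
  rw [H2_eq, div_le_one hlog2]
  exact Real.binEntropy_le_log_two

lemma H2_ge_parabola {t : ℝ} (h0 : 0 ≤ t) (h1 : t ≤ 1) : 1 - t^2 ≤ H2 ((1-t)/2) := by
  have := binEntropy_ge_parabola (x := (1-t)/2) (by linarith) (by linarith)
  rw [H2_eq, le_div_iff₀ hlog2]
  calc (1 - t^2) * Real.log 2 = 4 * Real.log 2 * ((1-t)/2 * (1 - (1-t)/2)) := by ring
    _ ≤ Real.binEntropy ((1-t)/2) := this

lemma H2_sym (x : ℝ) : H2 (1 - x) = H2 x := by
  rw [H2_eq, H2_eq, Real.binEntropy_one_sub]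

lemma H2_mono {a b : ℝ} (h0 : 0 ≤ a) (hab : a ≤ b) (hb : b ≤ 1 - a) : H2 a ≤ H2 b := by
  rw [H2_eq, H2_eq, div_le_div_iff_of_pos_right hlog2]
  rcases le_or_gt b 2⁻¹ with h | h
  · rcases eq_or_lt_of_le hab with rfl | hab'
    · exact le_refl _
    · exact le_of_lt (Real.binEntropy_strictMonoOn ⟨h0, le_trans hab h⟩ ⟨by linarith, h⟩ hab')
  · rw [← Real.binEntropy_one_sub b]
    have h1b : 1 - b < 2⁻¹ := by linarith
    rcases eq_or_lt_of_le (show a ≤ 1 - b by linarith) with heq | hlt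
    · rw [heq]
    · exact le_of_lt (Real.binEntropy_strictMonoOn ⟨h0, by linarith⟩
        ⟨by linarith, le_of_lt h1b⟩ hlt)

lemma concave_H2sq : ConcaveOn ℝ (Icc (0:ℝ) 1) (fun t => H2 t + t^2) := by
  have := concave_phi.smul (c := (Real.log 2)⁻¹) (by positivity)
  have heq : (fun t => H2 t + t^2)
      = fun t => (Real.log 2)⁻¹ • (Real.binEntropy t + Real.log 2 * t^2) := by
    funext t
    simp only [smul_eq_mul]
    rw [H2_eq]
    field_simp
  rw [heq]; exact this


/-- Gibbs' inequality (log-sum). -/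
lemma gibbs {ι : Type*} (s : Finset ι) (f g : ι → ℝ)
    (hf : ∀ i ∈ s, 0 ≤ f i) (hg : ∀ i ∈ s, 0 ≤ g i)
    (hfg : ∀ i ∈ s, g i = 0 → f i = 0)
    (hsum : ∑ i ∈ s, g i ≤ ∑ i ∈ s, f i) :
    0 ≤ ∑ i ∈ s, f i * Real.logb 2 (f i / g i) := by
  have key : ∀ i ∈ s, f i - g i ≤ f i * Real.log (f i / g i) := by
    intro i hi
    rcases eq_or_lt_of_le (hf i hi) with h0 | h0
    · rw [← h0]; simp [hg i hi]
    · have hgpos : 0 < g i := by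
        rcases eq_or_lt_of_le (hg i hi) with h | h
        · exact absurd (hfg i hi h.symm) (ne_of_gt h0)
        · exact h
      have hlog : Real.log (g i / f i) ≤ g i / f i - 1 :=
        Real.log_le_sub_one_of_pos (by positivity)
      have heq : Real.log (f i / g i) = - Real.log (g i / f i) := by
        rw [Real.log_div (ne_of_gt h0) (ne_of_gt hgpos),
          Real.log_div (ne_of_gt hgpos) (ne_of_gt h0)]; ring
      rw [heq]
      have h2 : 1 - g i / f i ≤ - Real.log (g i / f i) := by linarith
      calc f i - g i = f i * (1 - g i / f i) := by field_simp
        _ ≤ f i * (- Real.log (g i / f i)) :=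
            mul_le_mul_of_nonneg_left h2 (le_of_lt h0)
  have h1 : 0 ≤ ∑ i ∈ s, f i * Real.log (f i / g i) := by
    have := Finset.sum_le_sum key
    rw [Finset.sum_sub_distrib] at this
    linarith
  have h2 : ∑ i ∈ s, f i * Real.logb 2 (f i / g i)
      = (∑ i ∈ s, f i * Real.log (f i / g i)) / Real.log 2 := by
    rw [Finset.sum_div]
    refine Finset.sum_congr rfl fun i _ => ?_
    rw [Real.logb]
    ring
  rw [h2]
  positivity
lemma ent_pair {wt wf S : ℝ} (hwt : 0 ≤ wt) (hwf : 0 ≤ wf) (hS : wt + wf = S) :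
    wt * Real.logb 2 (S/wt) + wf * Real.logb 2 (S/wf) ≤ S := by
  rcases eq_or_lt_of_le (show (0:ℝ) ≤ S by linarith) with h0 | hpos
  · have h1 : wt = 0 := by linarith
    have h2 : wf = 0 := by linarith
    simp [h1, h2, ← h0]
  · have hSne : S ≠ 0 := ne_of_gt hpos
    set t := wt / S with ht
    have h1t : 1 - t = wf / S := by
      rw [ht]; field_simp; linarith
    have hterm1 : wt * Real.logb 2 (S/wt) = -(S * (t * Real.logb 2 t)) := by
      rcases eq_or_lt_of_le hwt with h | h
      · simp [← h, ht]
      · have : Real.logb 2 (S/wt) = -(Real.logb 2 t) := by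
          rw [ht, Real.logb_div (ne_of_gt h) hSne, Real.logb_div hSne (ne_of_gt h)]
          ring
        rw [this, ht]
        field_simp
    have hterm2 : wf * Real.logb 2 (S/wf) = -(S * ((1-t) * Real.logb 2 (1-t))) := by
      rcases eq_or_lt_of_le hwf with h | h
      · have ht1 : 1 - t = 0 := by rw [h1t, ← h]; simp
        simp [ht1, ← h]
      · have : Real.logb 2 (S/wf) = -(Real.logb 2 (1-t)) := by
          rw [h1t, Real.logb_div (ne_of_gt h) hSne, Real.logb_div hSne (ne_of_gt h)]
          ring
        rw [this, h1t]
        field_simp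
    rw [hterm1, hterm2]
    have : -(S * (t * Real.logb 2 t)) + -(S * ((1-t) * Real.logb 2 (1-t))) = S * H2 t := by
      unfold H2; ring
    rw [this]
    calc S * H2 t ≤ S * 1 := mul_le_mul_of_nonneg_left (H2_le_one t) (le_of_lt hpos)
      _ = S := by ring

lemma cmiJ_nonneg {A B C : Type*} [Fintype A] [Fintype B] [Fintype C]
    (p : A → B → C → ℝ) (h0 : ∀ a b c, 0 ≤ p a b c) : 0 ≤ cmiJ p := by
  unfold cmiJ
  have hswap : ∀ F : A → B → C → ℝ, (∑ a, ∑ b, ∑ c, F a b c) = ∑ c, ∑ a, ∑ b, F a b c := by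
    intro F
    have h1 : ∀ a, (∑ b, ∑ c, F a b c) = ∑ c, ∑ b, F a b c := fun a => Finset.sum_comm
    simp_rw [h1]
    exact Finset.sum_comm
  rw [hswap]
  apply Finset.sum_nonneg
  intro c _
  set S := ∑ a', ∑ b', p a' b' c with hSdef
  have hS0 : 0 ≤ S := Finset.sum_nonneg fun a _ => Finset.sum_nonneg fun b _ => h0 a b c
  rcases eq_or_lt_of_le hS0 with hS | hS
  · have hz : ∀ a b, p a b c = 0 := by
      intro a b
      by_contra hne
      have hp : 0 < p a b c := lt_of_le_of_ne (h0 a b c) (Ne.symm hne)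
      have h1 : p a b c ≤ ∑ b', p a b' c :=
        Finset.single_le_sum (f := fun b' => p a b' c) (fun b' _ => h0 a b' c) (Finset.mem_univ b)
      have h2 : (∑ b', p a b' c) ≤ S :=
        Finset.single_le_sum (f := fun a' => ∑ b', p a' b' c)
          (fun a' _ => Finset.sum_nonneg fun b' _ => h0 a' b' c) (Finset.mem_univ a)
      linarith
    apply le_of_eq
    symm
    apply Finset.sum_eq_zero; intro a _
    apply Finset.sum_eq_zero; intro b _
    rw [hz a b]; ring
  · have hgnn : ∀ x : A × B, 0 ≤ (∑ b', p x.1 b' c) * (∑ a', p a' x.2 c) / S := by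
      intro x
      have h1 : 0 ≤ (∑ b', p x.1 b' c) := Finset.sum_nonneg fun b' _ => h0 x.1 b' c
      have h2 : 0 ≤ (∑ a', p a' x.2 c) := Finset.sum_nonneg fun a' _ => h0 a' x.2 c
      positivity
    have hfg : ∀ x : A × B, (∑ b', p x.1 b' c) * (∑ a', p a' x.2 c) / S = 0 →
        p x.1 x.2 c = 0 := by
      intro x hgz
      rw [div_eq_zero_iff] at hgz
      rcases hgz with hgz | hgz
      · rcases mul_eq_zero.mp hgz with hz | hz
        · have := Finset.single_le_sum (f := fun b' => p x.1 b' c)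
            (fun b' _ => h0 x.1 b' c) (Finset.mem_univ x.2)
          rw [hz] at this
          linarith [h0 x.1 x.2 c]
        · have := Finset.single_le_sum (f := fun a' => p a' x.2 c)
            (fun a' _ => h0 a' x.2 c) (Finset.mem_univ x.1)
          rw [hz] at this
          linarith [h0 x.1 x.2 c]
      · exact absurd hgz (ne_of_gt hS)
    have hfsum : (∑ x : A × B, p x.1 x.2 c) = S := by
      rw [Fintype.sum_prod_type]
    have hgsum : (∑ x : A × B, (∑ b', p x.1 b' c) * (∑ a', p a' x.2 c) / S) = S := by
      rw [← Finset.sum_div, Fintype.sum_prod_type]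
      have hms : (∑ a, ∑ b, (∑ b', p a b' c) * (∑ a', p a' b c))
          = (∑ a, ∑ b', p a b' c) * (∑ b, ∑ a', p a' b c) := by
        rw [Finset.sum_mul_sum]
      rw [hms]
      have hcol : (∑ b, ∑ a', p a' b c) = S := Finset.sum_comm
      rw [hcol, ← hSdef]
      field_simp
    have key := gibbs (Finset.univ : Finset (A × B))
      (fun x => p x.1 x.2 c)
      (fun x => (∑ b', p x.1 b' c) * (∑ a', p a' x.2 c) / S)
      (fun x _ => h0 x.1 x.2 c)
      (fun x _ => hgnn x)
      (fun x _ => hfg x)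
      (by rw [hfsum, hgsum])
    calc (0:ℝ) ≤ ∑ x : A × B, p x.1 x.2 c *
          Real.logb 2 (p x.1 x.2 c / ((∑ b', p x.1 b' c) * (∑ a', p a' x.2 c) / S)) := key
      _ = ∑ a, ∑ b, p a b c * Real.logb 2 (p a b c * S / ((∑ b', p a b' c) * (∑ a', p a' b c))) := by
          rw [Fintype.sum_prod_type]
          refine Finset.sum_congr rfl fun a _ => Finset.sum_congr rfl fun b _ => ?_
          rw [div_div_eq_mul_div]

lemma cmiJ_le_one {A C : Type*} [Fintype A] [Fintype C]
    (p : A → Bool → C → ℝ) (h0 : ∀ a b c, 0 ≤ p a b c)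
    (h1 : (∑ a, ∑ b, ∑ c, p a b c) = 1) : cmiJ p ≤ 1 := by
  unfold cmiJ
  -- termwise bound
  have hstep1 : ∀ a b c, p a b c *
      Real.logb 2 ((p a b c * (∑ a', ∑ b', p a' b' c)) / ((∑ b', p a b' c) * (∑ a', p a' b c)))
      ≤ p a b c * Real.logb 2 ((∑ a', ∑ b', p a' b' c) / (∑ a', p a' b c)) := by
    intro a b c
    rcases eq_or_lt_of_le (h0 a b c) with hz | hp
    · rw [← hz]; ring_nf; exact le_refl _
    · have hrow : p a b c ≤ ∑ b', p a b' c :=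
        Finset.single_le_sum (f := fun b' => p a b' c) (fun b' _ => h0 a b' c) (Finset.mem_univ b)
      have hcol : p a b c ≤ ∑ a', p a' b c :=
        Finset.single_le_sum (f := fun a' => p a' b c) (fun a' _ => h0 a' b c) (Finset.mem_univ a)
      have hS : (∑ b', p a b' c) ≤ ∑ a', ∑ b', p a' b' c :=
        Finset.single_le_sum (f := fun a' => ∑ b', p a' b' c)
          (fun a' _ => Finset.sum_nonneg fun b' _ => h0 a' b' c) (Finset.mem_univ a)
      have hrowpos : 0 < ∑ b', p a b' c := lt_of_lt_of_le hp hrow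
      have hcolpos : 0 < ∑ a', p a' b c := lt_of_lt_of_le hp hcol
      have hSpos : 0 < ∑ a', ∑ b', p a' b' c := lt_of_lt_of_le hrowpos hS
      apply mul_le_mul_of_nonneg_left _ (le_of_lt hp)
      apply Real.logb_le_logb_of_le one_lt_two (by positivity)
      rw [div_le_div_iff₀ (by positivity) hcolpos]
      nlinarith [mul_nonneg (mul_nonneg (sub_nonneg.mpr hrow) (le_of_lt hSpos)) (le_of_lt hcolpos)]
  calc (∑ a, ∑ b, ∑ c, p a b c *
        Real.logb 2 ((p a b c * (∑ a', ∑ b', p a' b' c)) / ((∑ b', p a b' c) * (∑ a', p a' b c))))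
      ≤ ∑ a, ∑ b, ∑ c, p a b c *
        Real.logb 2 ((∑ a', ∑ b', p a' b' c) / (∑ a', p a' b c)) := by
        apply Finset.sum_le_sum; intro a _
        apply Finset.sum_le_sum; intro b _
        apply Finset.sum_le_sum; intro c _
        exact hstep1 a b c
    _ = ∑ c, ∑ b, (∑ a', p a' b c) *
        Real.logb 2 ((∑ a', ∑ b', p a' b' c) / (∑ a', p a' b c)) := by
        have hsw : (∑ a, ∑ b, ∑ c, p a b c *
            Real.logb 2 ((∑ a', ∑ b', p a' b' c) / (∑ a', p a' b c)))
            = ∑ c, ∑ b, ∑ a, p a b c *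
            Real.logb 2 ((∑ a', ∑ b', p a' b' c) / (∑ a', p a' b c)) := by
          have h1 : ∀ a : A, (∑ b, ∑ c, p a b c *
              Real.logb 2 ((∑ a', ∑ b', p a' b' c) / (∑ a', p a' b c)))
              = ∑ c, ∑ b, p a b c *
              Real.logb 2 ((∑ a', ∑ b', p a' b' c) / (∑ a', p a' b c)) :=
            fun a => Finset.sum_comm
          simp_rw [h1]
          rw [Finset.sum_comm]
          exact Finset.sum_congr rfl fun c _ => Finset.sum_comm
        rw [hsw]
        refine Finset.sum_congr rfl fun c _ => Finset.sum_congr rfl fun b _ => ?_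
        rw [← Finset.sum_mul]
    _ ≤ ∑ c, ∑ a, ∑ b, p a b c := by
        apply Finset.sum_le_sum; intro c _
        have hwt : 0 ≤ ∑ a', p a' true c := Finset.sum_nonneg fun a' _ => h0 a' true c
        have hwf : 0 ≤ ∑ a', p a' false c := Finset.sum_nonneg fun a' _ => h0 a' false c
        have hSsum : (∑ a', p a' true c) + (∑ a', p a' false c) = ∑ a, ∑ b, p a b c := by
          rw [← Finset.sum_add_distrib]
          refine Finset.sum_congr rfl fun a _ => ?_
          simp [Fintype.sum_bool]
        have := ent_pair hwt hwf hSsum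
        calc (∑ b, (∑ a', p a' b c) *
              Real.logb 2 ((∑ a', ∑ b', p a' b' c) / (∑ a', p a' b c)))
            = (∑ a', p a' true c) * Real.logb 2 ((∑ a, ∑ b, p a b c) / (∑ a', p a' true c))
              + (∑ a', p a' false c) *
                Real.logb 2 ((∑ a, ∑ b, p a b c) / (∑ a', p a' false c)) := by
              simp [Fintype.sum_bool]
          _ ≤ ∑ a, ∑ b, p a b c := this
    _ = 1 := by
        rw [← h1]
        rw [Finset.sum_comm]
        exact Finset.sum_congr rfl fun a _ => Finset.sum_comm

lemma miJ_decomp {k : ℕ} (w : Fin k → Bool → ℝ) (h0 : ∀ v y, 0 ≤ w v y)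
    (h1 : (∑ v, ∑ y, w v y) = 1) :
    miJ w = H2 (∑ v, w v true)
      - ∑ v, (w v true + w v false) * H2 (w v true / (w v true + w v false)) := by
  unfold miJ
  have hsumy : ∀ v, (∑ y, w v y) = w v true + w v false := by
    intro v; simp [Fintype.sum_bool]
  have hMf : (∑ v, w v false) = 1 - (∑ v, w v true) := by
    have : (∑ v, (w v true + w v false)) = 1 := by
      rw [← h1]; exact Finset.sum_congr rfl fun v _ => (hsumy v).symm
    rw [Finset.sum_add_distrib] at this
    linarith
  -- termwise split of the log
  have hsplit : ∀ v y, w v y * Real.logb 2 (w v y / ((∑ b', w v b') * (∑ a', w a' y)))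
      = w v y * Real.logb 2 (w v y / (w v true + w v false))
        - w v y * Real.logb 2 (∑ a', w a' y) := by
    intro v y
    rcases eq_or_lt_of_le (h0 v y) with hz | hp
    · rw [← hz]; ring
    · have hPy : w v y ≤ w v true + w v false := by
        cases y
        · linarith [h0 v true]
        · linarith [h0 v false]
      have hP : 0 < w v true + w v false := lt_of_lt_of_le hp hPy
      have hM : 0 < ∑ a', w a' y :=
        lt_of_lt_of_le hp (Finset.single_le_sum (f := fun a' => w a' y)
          (fun a' _ => h0 a' y) (Finset.mem_univ v))
      rw [hsumy v]
      rw [show w v y / ((w v true + w v false) * (∑ a', w a' y))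
          = (w v y / (w v true + w v false)) / (∑ a', w a' y) by
        rw [div_div]]
      rw [Real.logb_div (by positivity) (ne_of_gt hM)]
      ring
  simp_rw [hsplit]
  rw [show (∑ v, ∑ y, (w v y * Real.logb 2 (w v y / (w v true + w v false))
        - w v y * Real.logb 2 (∑ a', w a' y)))
      = (∑ v, ∑ y, w v y * Real.logb 2 (w v y / (w v true + w v false)))
        - ∑ v, ∑ y, w v y * Real.logb 2 (∑ a', w a' y) by
    rw [← Finset.sum_sub_distrib]
    exact Finset.sum_congr rfl fun v _ => Finset.sum_sub_distrib _ _]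
  have hB : (∑ v, ∑ y, w v y * Real.logb 2 (∑ a', w a' y))
      = -H2 (∑ v, w v true) := by
    rw [Finset.sum_comm]
    have : ∀ y, (∑ v, w v y * Real.logb 2 (∑ a', w a' y))
        = (∑ v, w v y) * Real.logb 2 (∑ a', w a' y) := by
      intro y; rw [← Finset.sum_mul]
    simp_rw [this]
    rw [show (∑ y, (∑ v, w v y) * Real.logb 2 (∑ a', w a' y))
        = (∑ v, w v true) * Real.logb 2 (∑ a', w a' true)
          + (∑ v, w v false) * Real.logb 2 (∑ a', w a' false) by
      simp [Fintype.sum_bool]]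
    rw [hMf]
    unfold H2
    ring
  have hA : ∀ v, (∑ y, w v y * Real.logb 2 (w v y / (w v true + w v false)))
      = -((w v true + w v false) * H2 (w v true / (w v true + w v false))) := by
    intro v
    rcases eq_or_lt_of_le (add_nonneg (h0 v true) (h0 v false)) with hz | hP
    · have h1 : w v true = 0 := by linarith [h0 v true, h0 v false]
      have h2 : w v false = 0 := by linarith [h0 v true, h0 v false]
      simp [h1, h2]
    · have hne : w v true + w v false ≠ 0 := ne_of_gt hP
      have hfr : w v false / (w v true + w v false)
          = 1 - w v true / (w v true + w v false) := by
        field_simp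
        ring
      rw [show (∑ y, w v y * Real.logb 2 (w v y / (w v true + w v false)))
          = w v true * Real.logb 2 (w v true / (w v true + w v false))
            + w v false * Real.logb 2 (w v false / (w v true + w v false)) by
        simp [Fintype.sum_bool]]
      rw [hfr]
      unfold H2
      set P := w v true + w v false with hPdef
      set t := w v true / P with htdef
      have e1 : P * t = w v true := by
        rw [htdef]; field_simp
      have e2 : P * (1-t) = w v false := by
        rw [mul_sub, mul_one, e1, hPdef]; ring
      generalize Real.logb 2 t = L1
      generalize Real.logb 2 (1 - t) = L2
      linear_combination (-L1) * e1 + (-L2) * e2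
  simp_rw [hA, hB]
  rw [Finset.sum_neg_distrib]
  ring

lemma elem_bound {k : ℕ} (pV : Fin k → Bool → Bool → ℝ)
    (h0 : ∀ v x z, 0 ≤ pV v x z) (h1 : (∑ v, ∑ x, ∑ z, pV v x z) = 1)
    (hc : (∑ v, ∑ x, pV v x true) ≤ 1 / 2) :
    miJ (fun v y => ∑ x, ∑ z, pV v x z * chY x z y)
      - miJ (fun v z => ∑ x, pV v x z) ≤ 1/4 := by
  set pY : Fin k → Bool → ℝ := fun v y => ∑ x, ∑ z, pV v x z * chY x z y with hpYdef
  set pZ : Fin k → Bool → ℝ := fun v z => ∑ x, pV v x z with hpZdef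
  -- explicit formulas
  have hYt : ∀ v, pY v true = pV v true true
      + (pV v true false + pV v false false)/2 := by
    intro v
    simp only [hpYdef, Fintype.sum_bool, chY]
    norm_num
    ring
  have hYf : ∀ v, pY v false = pV v false true
      + (pV v true false + pV v false false)/2 := by
    intro v
    simp only [hpYdef, Fintype.sum_bool, chY]
    norm_num
    ring
  have hZt : ∀ v, pZ v true = pV v true true + pV v false true := by
    intro v; simp only [hpZdef, Fintype.sum_bool]
  have hZf : ∀ v, pZ v false = pV v true false + pV v false false := by
    intro v; simp only [hpZdef, Fintype.sum_bool]
  have hrow : ∀ v, pY v true + pY v false = pZ v true + pZ v false := by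
    intro v; rw [hYt, hYf, hZt, hZf]; ring
  have hY0 : ∀ v y, 0 ≤ pY v y := by
    intro v y
    rcases y
    · rw [hYf]; have := h0 v true false; have := h0 v false false; have := h0 v false true; linarith
    · rw [hYt]; have := h0 v true false; have := h0 v false false; have := h0 v true true; linarith
  have hZ0 : ∀ v z, 0 ≤ pZ v z := fun v z => Finset.sum_nonneg fun x _ => h0 v x z
  have hZsum : (∑ v, ∑ z, pZ v z) = 1 := by
    rw [← h1]
    refine Finset.sum_congr rfl fun v _ => ?_
    simp only [hpZdef, Fintype.sum_bool]
    ring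
  have hYsum : (∑ v, ∑ y, pY v y) = 1 := by
    rw [← hZsum]
    refine Finset.sum_congr rfl fun v _ => ?_
    simp only [Fintype.sum_bool]
    linarith [hrow v]
  rw [miJ_decomp pY hY0 hYsum, miJ_decomp pZ hZ0 hZsum]
  set P : Fin k → ℝ := fun v => pZ v true + pZ v false with hPdef
  set q : Fin k → ℝ := fun v => pZ v true / P v with hqdef
  set yv : Fin k → ℝ := fun v => pY v true / P v with hyvdef
  set Q : ℝ := ∑ v, pZ v true with hQdef
  have hPsum : (∑ v, P v) = 1 := by
    rw [← hZsum]
    exact Finset.sum_congr rfl fun v _ => by simp [hPdef, Fintype.sum_bool]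
  have hP0 : ∀ v, 0 ≤ P v := fun v => add_nonneg (hZ0 v true) (hZ0 v false)
  have hq01 : ∀ v, q v ∈ Icc (0:ℝ) 1 := by
    intro v
    rcases eq_or_lt_of_le (hP0 v) with hz | hp
    · constructor <;> simp [hqdef, ← hz]
    · constructor
      · exact div_nonneg (hZ0 v true) (hP0 v)
      · rw [hqdef, div_le_one hp]
        simp only [hPdef]
        linarith [hZ0 v false]
  have hPq : ∀ v, P v * q v = pZ v true := by
    intro v
    rcases eq_or_lt_of_le (hP0 v) with hz | hp
    · have : pZ v true = 0 := by
        have := hZ0 v false; simp only [hPdef] at hz; linarith [hZ0 v true]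
      simp [hqdef, this]
    · rw [hqdef]; field_simp
  -- per-v inequality
  have hperv : ∀ v, P v * H2 (q v) - P v * H2 (yv v)
      ≤ P v * (H2 (q v) + (q v)^2) - P v := by
    intro v
    rcases eq_or_lt_of_le (hP0 v) with hz | hp
    · rw [← hz]; ring_nf; exact le_refl _
    · have hq1 := (hq01 v).2
      have hq0 := (hq01 v).1
      have hyge : (1 - q v)/2 ≤ yv v := by
        rw [hqdef, hyvdef]
        rw [div_le_div_iff₀ (by norm_num) hp]
        rw [hYt v]
        have expand : (1 - pZ v true / P v) * P v = P v - pZ v true := by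
          field_simp
        rw [expand]
        have e2 : P v - pZ v true = pV v true false + pV v false false := by
          simp only [hPdef]; rw [hZt, hZf]; ring
        rw [e2]
        linarith [h0 v true true]
      have hyle : yv v ≤ 1 - (1 - q v)/2 := by
        rw [hqdef, hyvdef]
        have e : 1 - (1 - pZ v true / P v)/2 = (P v + pZ v true)/(2 * P v) := by
          field_simp; ring
        rw [e, div_le_div_iff₀ hp (by linarith)]
        rw [hYt v]
        have h2' : 2 * pV v true true + (pV v true false + pV v false false)
            ≤ P v + pZ v true := by
          simp only [hPdef]; rw [hZt, hZf]; linarith [h0 v false true]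
        have h3 := mul_le_mul_of_nonneg_right h2' (le_of_lt hp)
        ring_nf at h3 ⊢
        linarith [h3]
      have hmono := H2_mono (a := (1 - q v)/2) (b := yv v)
        (by linarith) hyge (by linarith)
      have hpar := H2_ge_parabola hq0 hq1
      have : 1 - (q v)^2 ≤ H2 (yv v) := le_trans hpar hmono
      have hineq : H2 (q v) - H2 (yv v) ≤ H2 (q v) + (q v)^2 - 1 := by linarith
      calc P v * H2 (q v) - P v * H2 (yv v) = P v * (H2 (q v) - H2 (yv v)) := by ring
        _ ≤ P v * (H2 (q v) + (q v)^2 - 1) :=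
            mul_le_mul_of_nonneg_left hineq (le_of_lt hp)
        _ = P v * (H2 (q v) + (q v)^2) - P v := by ring
  -- Jensen
  have hQ' : (∑ v, P v * q v) = Q := by
    rw [hQdef]; exact Finset.sum_congr rfl fun v _ => hPq v
  have hjensen : (∑ v, P v * (H2 (q v) + (q v)^2)) ≤ H2 Q + Q^2 := by
    have := concave_H2sq.le_map_sum (t := Finset.univ) (w := P) (p := q)
      (fun v _ => hP0 v) hPsum (fun v _ => hq01 v)
    simp only [smul_eq_mul] at this
    rw [hQ'] at this
    exact this
  have hQ0 : 0 ≤ Q := Finset.sum_nonneg fun v _ => hZ0 v true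
  have hQc : Q ≤ 1/2 := by
    rw [hQdef]
    calc (∑ v, pZ v true) = ∑ v, ∑ x, pV v x true := by
          exact Finset.sum_congr rfl fun v _ => rfl
      _ ≤ 1/2 := hc
  -- assemble
  have hsum_ineq : (∑ v, P v * H2 (q v)) - (∑ v, P v * H2 (yv v))
      ≤ (∑ v, P v * (H2 (q v) + (q v)^2)) - 1 := by
    rw [← Finset.sum_sub_distrib]
    have : (∑ v, P v * (H2 (q v) + (q v)^2)) - 1
        = ∑ v, (P v * (H2 (q v) + (q v)^2) - P v) := by
      rw [Finset.sum_sub_distrib, hPsum]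
    rw [this]
    exact Finset.sum_le_sum fun v _ => hperv v
  have hH2MY := H2_le_one (∑ v, pY v true)
  have hrw1 : (∑ v, (pY v true + pY v false) * H2 (pY v true / (pY v true + pY v false)))
      = ∑ v, P v * H2 (yv v) := by
    refine Finset.sum_congr rfl fun v _ => ?_
    have e : pY v true + pY v false = P v := by
      simp only [hPdef]; exact hrow v
    rw [e]
  have hrw2 : (∑ v, (pZ v true + pZ v false) * H2 (pZ v true / (pZ v true + pZ v false)))
      = ∑ v, P v * H2 (q v) := by
    refine Finset.sum_congr rfl fun v _ => rfl
  rw [hrw1, hrw2]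
  have final : H2 (∑ v, pY v true) - (∑ v, P v * H2 (yv v))
      - (H2 Q - (∑ v, P v * H2 (q v))) ≤ Q^2 := by
    have := hjensen
    nlinarith [hsum_ineq, hH2MY, hjensen]
  calc H2 (∑ v, pY v true) - (∑ v, P v * H2 (yv v))
      - (H2 (∑ v, pZ v true) - (∑ v, P v * H2 (q v)))
      = H2 (∑ v, pY v true) - (∑ v, P v * H2 (yv v)) - (H2 Q - (∑ v, P v * H2 (q v))) := rfl
    _ ≤ Q^2 := final
    _ ≤ 1/4 := by nlinarith [hQ0, hQc]

noncomputable def wpuv : Fin 2 → Fin 4 → ℝ := fun u v => if (v.val % 2 = u.val) then 1/4 else 0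
noncomputable def wpxv : Fin 4 → Bool × Bool → ℝ :=
  fun v x => if x = (decide (2 ≤ v.val), decide (v.val % 2 = 1)) then 1 else 0

lemma wit_cmiY : cmiJ (fun (v : Fin 4) (y : Bool) (u : Fin 2) =>
      ∑ x : Bool × Bool, wpuv u v * wpxv v x * chY x.1 x.2 y) = 1/2 := by
  unfold cmiJ wpuv wpxv chY
  simp only [Fin.sum_univ_four, Fin.sum_univ_two, Fintype.sum_bool, Fintype.sum_prod_type,
    show ((0:Fin 4):ℕ) = 0 from rfl, show ((1:Fin 4):ℕ) = 1 from rfl,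
    show ((2:Fin 4):ℕ) = 2 from rfl, show ((3:Fin 4):ℕ) = 3 from rfl,
    show ((0:Fin 2):ℕ) = 0 from rfl, show ((1:Fin 2):ℕ) = 1 from rfl]
  norm_num [Real.logb_self_eq_one]

lemma wit_cmiZ : cmiJ (fun (v : Fin 4) (z : Bool) (u : Fin 2) =>
      ∑ x : Bool × Bool, wpuv u v * wpxv v x * (if z = x.2 then (1:ℝ) else 0)) = 0 := by
  unfold cmiJ wpuv wpxv
  simp only [Fin.sum_univ_four, Fin.sum_univ_two, Fintype.sum_bool, Fintype.sum_prod_type,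
    show ((0:Fin 4):ℕ) = 0 from rfl, show ((1:Fin 4):ℕ) = 1 from rfl,
    show ((2:Fin 4):ℕ) = 2 from rfl, show ((3:Fin 4):ℕ) = 3 from rfl,
    show ((0:Fin 2):ℕ) = 0 from rfl, show ((1:Fin 2):ℕ) = 1 from rfl]
  norm_num [Real.logb_self_eq_one]

lemma wit_puv_sum : (∑ u, ∑ v, wpuv u v) = 1 := by
  unfold wpuv
  simp only [Fin.sum_univ_four, Fin.sum_univ_two,
    show ((0:Fin 4):ℕ) = 0 from rfl, show ((1:Fin 4):ℕ) = 1 from rfl,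
    show ((2:Fin 4):ℕ) = 2 from rfl, show ((3:Fin 4):ℕ) = 3 from rfl,
    show ((0:Fin 2):ℕ) = 0 from rfl, show ((1:Fin 2):ℕ) = 1 from rfl]
  norm_num

lemma wit_pxv_sum : ∀ v, (∑ x : Bool × Bool, wpxv v x) = 1 := by
  intro v
  unfold wpxv
  fin_cases v <;>
    simp [Fintype.sum_prod_type, Fintype.sum_bool]

lemma wit_cost : (∑ x : Bool × Bool, (∑ v, (∑ u, wpuv u v) * wpxv v x) * (if x.2 then (1:ℝ) else 0)) ≤ 1/2 := by
  unfold wpuv wpxv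
  simp only [Fin.sum_univ_four, Fin.sum_univ_two, Fintype.sum_bool, Fintype.sum_prod_type,
    show ((0:Fin 4):ℕ) = 0 from rfl, show ((1:Fin 4):ℕ) = 1 from rfl,
    show ((2:Fin 4):ℕ) = 2 from rfl, show ((3:Fin 4):ℕ) = 3 from rfl,
    show ((0:Fin 2):ℕ) = 0 from rfl, show ((1:Fin 2):ℕ) = 1 from rfl]
  norm_num

lemma wit_puv_nn : ∀ u v, 0 ≤ wpuv u v := by
  intro u v; unfold wpuv; positivity

lemma wit_pxv_nn : ∀ v x, 0 ≤ wpxv v x := by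
  intro v x; unfold wpxv; positivity


lemma chY_nonneg : ∀ x z y, 0 ≤ chY x z y := by
  intro x z y
  unfold chY
  split
  · split <;> norm_num
  · norm_num

lemma chY_sum (x1 x2 : Bool) : (∑ y, chY x1 x2 y) = 1 := by
  cases x2
  · simp [chY, Fintype.sum_bool]
  · cases x1 <;> simp [chY, Fintype.sum_bool]

lemma sum3_Y {mU mV : ℕ} (puv : Fin mU → Fin mV → ℝ) (pxv : Fin mV → Bool × Bool → ℝ)
    (hpuv1 : (∑ u, ∑ v, puv u v) = 1) (hpxv1 : ∀ v, (∑ x : Bool × Bool, pxv v x) = 1) :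
    (∑ v, ∑ y, ∑ u, ∑ x : Bool × Bool, puv u v * pxv v x * chY x.1 x.2 y) = 1 := by
  have hv : ∀ v : Fin mV, (∑ y, ∑ u, ∑ x : Bool × Bool, puv u v * pxv v x * chY x.1 x.2 y)
      = ∑ u, puv u v := by
    intro v
    rw [Finset.sum_comm]
    refine Finset.sum_congr rfl fun u _ => ?_
    rw [Finset.sum_comm]
    calc (∑ x : Bool × Bool, ∑ y, puv u v * pxv v x * chY x.1 x.2 y)
        = ∑ x : Bool × Bool, puv u v * pxv v x * (∑ y, chY x.1 x.2 y) := by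
          refine Finset.sum_congr rfl fun x _ => ?_
          rw [Finset.mul_sum]
      _ = ∑ x : Bool × Bool, puv u v * pxv v x := by
          refine Finset.sum_congr rfl fun x _ => ?_
          rw [chY_sum, mul_one]
      _ = puv u v * ∑ x : Bool × Bool, pxv v x := by rw [Finset.mul_sum]
      _ = puv u v := by rw [hpxv1 v, mul_one]
  simp_rw [hv]
  rw [Finset.sum_comm]
  exact hpuv1

lemma sum3_Z {mU mV : ℕ} (puv : Fin mU → Fin mV → ℝ) (pxv : Fin mV → Bool × Bool → ℝ)
    (hpuv1 : (∑ u, ∑ v, puv u v) = 1) (hpxv1 : ∀ v, (∑ x : Bool × Bool, pxv v x) = 1) :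
    (∑ v, ∑ z, ∑ u, ∑ x : Bool × Bool, puv u v * pxv v x * (if z = x.2 then (1:ℝ) else 0)) = 1 := by
  have hind : ∀ x2 : Bool, (∑ z, (if z = x2 then (1:ℝ) else 0)) = 1 := by
    intro x2; cases x2 <;> simp [Fintype.sum_bool]
  have hv : ∀ v : Fin mV, (∑ z, ∑ u, ∑ x : Bool × Bool, puv u v * pxv v x *
      (if z = x.2 then (1:ℝ) else 0)) = ∑ u, puv u v := by
    intro v
    rw [Finset.sum_comm]
    refine Finset.sum_congr rfl fun u _ => ?_
    rw [Finset.sum_comm]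
    calc (∑ x : Bool × Bool, ∑ z, puv u v * pxv v x * (if z = x.2 then (1:ℝ) else 0))
        = ∑ x : Bool × Bool, puv u v * pxv v x * (∑ z, (if z = x.2 then (1:ℝ) else 0)) := by
          refine Finset.sum_congr rfl fun x _ => ?_
          rw [Finset.mul_sum]
      _ = ∑ x : Bool × Bool, puv u v * pxv v x := by
          refine Finset.sum_congr rfl fun x _ => ?_
          rw [hind, mul_one]
      _ = puv u v * ∑ x : Bool × Bool, pxv v x := by rw [Finset.mul_sum]
      _ = puv u v := by rw [hpxv1 v, mul_one]
  simp_rw [hv]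
  rw [Finset.sum_comm]
  exact hpuv1

/-- For the binary example channel, the best single-auxiliary value
is strictly less than `1/2`, and hence strictly less than the two-auxiliary
secrecy-capacity expression (which is at least `1/2`). -/
theorem stmt6 :
    sSup {r : ℝ | ∃ (k : ℕ) (pV : Fin k → Bool → Bool → ℝ),
        (∀ v x z, 0 ≤ pV v x z) ∧ (∑ v, ∑ x, ∑ z, pV v x z) = 1 ∧
        (∑ v, ∑ x, pV v x true) ≤ 1 / 2 ∧
        r = miJ (fun v y => ∑ x, ∑ z, pV v x z * chY x z y)
          - miJ (fun v z => ∑ x, pV v x z)} < 1 / 2 ∧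
    sSup {r : ℝ | ∃ (k : ℕ) (pV : Fin k → Bool → Bool → ℝ),
        (∀ v x z, 0 ≤ pV v x z) ∧ (∑ v, ∑ x, ∑ z, pV v x z) = 1 ∧
        (∑ v, ∑ x, pV v x true) ≤ 1 / 2 ∧
        r = miJ (fun v y => ∑ x, ∑ z, pV v x z * chY x z y)
          - miJ (fun v z => ∑ x, pV v x z)} <
      sSup {r : ℝ | ∃ (mU mV : ℕ) (puv : Fin mU → Fin mV → ℝ)
          (pxv : Fin mV → Bool × Bool → ℝ),
        (∀ u v, 0 ≤ puv u v) ∧ (∑ u, ∑ v, puv u v) = 1 ∧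
        (∀ v x, 0 ≤ pxv v x) ∧ (∀ v, ∑ x, pxv v x = 1) ∧
        (∑ x : Bool × Bool, (∑ v, (∑ u, puv u v) * pxv v x) * (if x.2 then (1:ℝ) else 0)) ≤ 1 / 2 ∧
        r = cmiJ (fun (v : Fin mV) (y : Bool) (u : Fin mU) =>
              ∑ x : Bool × Bool, puv u v * pxv v x * chY x.1 x.2 y)
          - cmiJ (fun (v : Fin mV) (z : Bool) (u : Fin mU) =>
              ∑ x : Bool × Bool, puv u v * pxv v x * (if z = x.2 then 1 else 0))} := by
  have hbound1 : ∀ r ∈ {r : ℝ | ∃ (k : ℕ) (pV : Fin k → Bool → Bool → ℝ),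
      (∀ v x z, 0 ≤ pV v x z) ∧ (∑ v, ∑ x, ∑ z, pV v x z) = 1 ∧
      (∑ v, ∑ x, pV v x true) ≤ 1 / 2 ∧
      r = miJ (fun v y => ∑ x, ∑ z, pV v x z * chY x z y)
        - miJ (fun v z => ∑ x, pV v x z)}, r ≤ 1/4 := by
    rintro r ⟨k, pV, h0, h1, hc, rfl⟩
    exact elem_bound pV h0 h1 hc
  have hsup1 : sSup {r : ℝ | ∃ (k : ℕ) (pV : Fin k → Bool → Bool → ℝ),
      (∀ v x z, 0 ≤ pV v x z) ∧ (∑ v, ∑ x, ∑ z, pV v x z) = 1 ∧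
      (∑ v, ∑ x, pV v x true) ≤ 1 / 2 ∧
      r = miJ (fun v y => ∑ x, ∑ z, pV v x z * chY x z y)
        - miJ (fun v z => ∑ x, pV v x z)} ≤ 1/4 :=
    Real.sSup_le hbound1 (by norm_num)
  have hlt : sSup {r : ℝ | ∃ (k : ℕ) (pV : Fin k → Bool → Bool → ℝ),
      (∀ v x z, 0 ≤ pV v x z) ∧ (∑ v, ∑ x, ∑ z, pV v x z) = 1 ∧
      (∑ v, ∑ x, pV v x true) ≤ 1 / 2 ∧
      r = miJ (fun v y => ∑ x, ∑ z, pV v x z * chY x z y)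
        - miJ (fun v z => ∑ x, pV v x z)} < 1/2 :=
    lt_of_le_of_lt hsup1 (by norm_num)
  refine ⟨hlt, lt_of_lt_of_le hlt ?_⟩
  have hbdd : BddAbove {r : ℝ | ∃ (mU mV : ℕ) (puv : Fin mU → Fin mV → ℝ)
      (pxv : Fin mV → Bool × Bool → ℝ),
      (∀ u v, 0 ≤ puv u v) ∧ (∑ u, ∑ v, puv u v) = 1 ∧
      (∀ v x, 0 ≤ pxv v x) ∧ (∀ v, ∑ x, pxv v x = 1) ∧
      (∑ x : Bool × Bool, (∑ v, (∑ u, puv u v) * pxv v x) * (if x.2 then (1:ℝ) else 0)) ≤ 1 / 2 ∧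
      r = cmiJ (fun (v : Fin mV) (y : Bool) (u : Fin mU) =>
            ∑ x : Bool × Bool, puv u v * pxv v x * chY x.1 x.2 y)
        - cmiJ (fun (v : Fin mV) (z : Bool) (u : Fin mU) =>
            ∑ x : Bool × Bool, puv u v * pxv v x * (if z = x.2 then 1 else 0))} := by
    refine ⟨1, ?_⟩
    rintro r ⟨mU, mV, puv, pxv, hpuv0, hpuv1, hpxv0, hpxv1, hcost, rfl⟩
    have hYnn : ∀ (v : Fin mV) (y : Bool) (u : Fin mU),
        0 ≤ ∑ x : Bool × Bool, puv u v * pxv v x * chY x.1 x.2 y := by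
      intro v y u
      exact Finset.sum_nonneg fun x _ =>
        mul_nonneg (mul_nonneg (hpuv0 u v) (hpxv0 v x)) (chY_nonneg x.1 x.2 y)
    have hZnn : ∀ (v : Fin mV) (z : Bool) (u : Fin mU),
        0 ≤ ∑ x : Bool × Bool, puv u v * pxv v x * (if z = x.2 then (1:ℝ) else 0) := by
      intro v z u
      refine Finset.sum_nonneg fun x _ => mul_nonneg (mul_nonneg (hpuv0 u v) (hpxv0 v x)) ?_
      split <;> norm_num
    have hle := cmiJ_le_one (fun (v : Fin mV) (y : Bool) (u : Fin mU) =>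
        ∑ x : Bool × Bool, puv u v * pxv v x * chY x.1 x.2 y) hYnn
      (sum3_Y puv pxv hpuv1 hpxv1)
    have hge := cmiJ_nonneg (fun (v : Fin mV) (z : Bool) (u : Fin mU) =>
        ∑ x : Bool × Bool, puv u v * pxv v x * (if z = x.2 then (1:ℝ) else 0)) hZnn
    linarith
  have hmem : (1/2 : ℝ) ∈ {r : ℝ | ∃ (mU mV : ℕ) (puv : Fin mU → Fin mV → ℝ)
      (pxv : Fin mV → Bool × Bool → ℝ),
      (∀ u v, 0 ≤ puv u v) ∧ (∑ u, ∑ v, puv u v) = 1 ∧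
      (∀ v x, 0 ≤ pxv v x) ∧ (∀ v, ∑ x, pxv v x = 1) ∧
      (∑ x : Bool × Bool, (∑ v, (∑ u, puv u v) * pxv v x) * (if x.2 then (1:ℝ) else 0)) ≤ 1 / 2 ∧
      r = cmiJ (fun (v : Fin mV) (y : Bool) (u : Fin mU) =>
            ∑ x : Bool × Bool, puv u v * pxv v x * chY x.1 x.2 y)
        - cmiJ (fun (v : Fin mV) (z : Bool) (u : Fin mU) =>
            ∑ x : Bool × Bool, puv u v * pxv v x * (if z = x.2 then 1 else 0))} := by
    refine ⟨2, 4, wpuv, wpxv, wit_puv_nn, wit_puv_sum, wit_pxv_nn, wit_pxv_sum, wit_cost, ?_⟩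
    rw [wit_cmiY, wit_cmiZ]
    norm_num
  exact le_csSup hbdd hmem
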